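/- Let F3 = [[1,0,0],[1,1,0],[0,1,1]] and G24 = F3 ⊗ F8. Let T2 be the 24×24 block matrix [[T,0,T],[0,I8,0],[0,0,I8]]. Then the rows of T2·G24 indexed by A2 = {2,3,4,8,12,14,15,16,20,22,23,24} generate the (24,12,8) extended Golay code given by [[G8',G8',G8'],[G8,G8,0],[0,G8,G8]]. -/

import Mathlib

open Matrix

/-- Generator matrix of the (8,4,4) Reed–Muller code. -/
def G8 : Matrix (Fin 4) (Fin 8) (ZMod 2) :=
  !![1,1,1,1,0,0,0,0; 1,1,0,0,1,1,0,0; 1,0,1,0,1,0,1,0; 1,1,1,1,1,1,1,1]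

/-- Column-permuted copy of G8 (permutation π3). -/
def G8' : Matrix (Fin 4) (Fin 8) (ZMod 2) :=
  !![0,1,1,1,1,0,0,0; 1,0,0,1,1,1,0,0; 1,1,0,0,1,0,1,0; 1,1,1,1,1,1,1,1]

/-- Assemble a 12×24 matrix from a 3×3 array of 4×8 blocks. -/
def build (M : Fin 3 → Fin 3 → Matrix (Fin 4) (Fin 8) (ZMod 2)) :
    Matrix (Fin 12) (Fin 24) (ZMod 2) :=
  Matrix.of fun i j =>
    M ⟨i.1 / 4, by have := i.2; omega⟩ ⟨j.1 / 8, by have := j.2; omega⟩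
      ⟨i.1 % 4, by omega⟩ ⟨j.1 % 8, by omega⟩

/-- Assemble a 24×24 matrix from a 3×3 array of 8×8 blocks. -/
def build8 (M : Fin 3 → Fin 3 → Matrix (Fin 8) (Fin 8) (ZMod 2)) :
    Matrix (Fin 24) (Fin 24) (ZMod 2) :=
  Matrix.of fun i j =>
    M ⟨i.1 / 8, by have := i.2; omega⟩ ⟨j.1 / 8, by have := j.2; omega⟩
      ⟨i.1 % 8, by omega⟩ ⟨j.1 % 8, by omega⟩

/-- The binary linear code generated by (the rows of) a matrix. -/
def code {k n : ℕ} (M : Matrix (Fin k) (Fin n) (ZMod 2)) :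
    Submodule (ZMod 2) (Fin n → ZMod 2) :=
  LinearMap.range M.vecMulLinear

/-- The cubing-construction generator matrix of the (24,12,8) extended Golay code. -/
def Ghat : Matrix (Fin 12) (Fin 24) (ZMod 2) :=
  build ![![G8, 0, G8], ![0, G8, G8], ![G8', G8', G8']]

/-- The 2×2 polar kernel. -/
def F2k : Matrix (Fin 2) (Fin 2) (ZMod 2) := !![1,0; 1,1]

/-- F8 = F2 ⊗ F2 ⊗ F2 (Kronecker product), written entrywise. -/
def F8 : Matrix (Fin 8) (Fin 8) (ZMod 2) :=
  Matrix.of fun i j =>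
    F2k ⟨i.1 / 4, by have := i.2; omega⟩ ⟨j.1 / 4, by have := j.2; omega⟩ *
    F2k ⟨i.1 / 2 % 2, by omega⟩ ⟨j.1 / 2 % 2, by omega⟩ *
    F2k ⟨i.1 % 2, by omega⟩ ⟨j.1 % 2, by omega⟩

/-- The 8×8 convolution matrix T of Proposition 1: identity plus extra ones at
(one-based) positions (2,3), (2,7), (3,4), (3,6), (4,5). -/
def T8 : Matrix (Fin 8) (Fin 8) (ZMod 2) :=
  Matrix.of fun i j =>
    if i = j ∨ (i = 1 ∧ j = 2) ∨ (i = 1 ∧ j = 6) ∨ (i = 2 ∧ j = 3) ∨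
       (i = 2 ∧ j = 5) ∨ (i = 3 ∧ j = 4) then 1 else 0

def F3b : Matrix (Fin 3) (Fin 3) (ZMod 2) := !![1,0,0; 1,1,0; 0,1,1]

/-- G24 = F3 ⊗ F8 for Kernel 2. -/
def G24b : Matrix (Fin 24) (Fin 24) (ZMod 2) :=
  Matrix.of fun i j =>
    F3b ⟨i.1 / 8, by have := i.2; omega⟩ ⟨j.1 / 8, by have := j.2; omega⟩ *
    F8 ⟨i.1 % 8, by omega⟩ ⟨j.1 % 8, by omega⟩

/-- T2 = [[T,0,T],[0,I8,0],[0,0,I8]]. -/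
def T2 : Matrix (Fin 24) (Fin 24) (ZMod 2) :=
  build8 ![![T8, 0, T8], ![0, 1, 0], ![0, 0, 1]]

/-!
Block multiplication gives `T2 * G24 = [[T F8, T F8, T F8], [F8, F8, 0], [0, F8, F8]]`.
Rows 3, 5, 6, 7 (zero-based) of `F8 = F2^{⊗3}` are exactly `G8`, and rows 3, 2, 1, 7 of `T F8`
are exactly `G8'`; hence the rows of `T2 * G24` indexed by `A2` are, up to order, the rows of
the Golay generator matrix.
-/

theorem build8_eq_submatrix_comp (B : Fin 3 → Fin 3 → Matrix (Fin 8) (Fin 8) (ZMod 2)) :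
    build8 B = (comp _ _ _ _ _ (of B)).submatrix finProdFinEquiv.symm finProdFinEquiv.symm :=
  rfl

theorem build8_mul (B C : Fin 3 → Fin 3 → Matrix (Fin 8) (Fin 8) (ZMod 2)) :
    build8 B * build8 C = build8 fun I K => ∑ J, B I J * C J K := by
  simp only [build8_eq_submatrix_comp, submatrix_mul_equiv]
  rw [← compRingEquiv_apply, ← compRingEquiv_apply, ← map_mul]
  rfl

theorem G24b_eq_build8 : G24b = build8 fun I J => F3b I J • F8 :=
  rfl

theorem T2_mul_G24b :
    T2 * G24b = build8 ![![T8 * F8, T8 * F8, T8 * F8], ![F8, F8, 0], ![0, F8, F8]] := by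
  rw [T2, G24b_eq_build8, build8_mul]
  congr 1
  ext I K : 2
  fin_cases I <;> fin_cases K <;> simp [Fin.sum_univ_three, F3b]

def blockRowIndex (r : Fin 3 → Fin 4 → Fin 8) (k : Fin (3 * 4)) : Fin (3 * 8) :=
  finProdFinEquiv (k.divNat, r k.divNat k.modNat)

theorem build_submatrix_eq_build8_submatrix
    (B : Fin 3 → Fin 3 → Matrix (Fin 8) (Fin 8) (ZMod 2)) (r : Fin 3 → Fin 4 → Fin 8) :
    build (fun I J => (B I J).submatrix (r I) id) =
      (build8 B).submatrix (blockRowIndex r) id := by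
  ext k j
  rw [build8_eq_submatrix_comp]
  unfold blockRowIndex
  simp only [submatrix_apply, id, Equiv.symm_apply_apply]
  rfl

theorem G8_eq_submatrix_F8 : G8 = F8.submatrix ![3, 5, 6, 7] id := by decide

theorem G8'_eq_submatrix_T8_mul_F8 : G8' = (T8 * F8).submatrix ![3, 2, 1, 7] id := by decide

theorem code_submatrix_rows {k m n : ℕ} (N : Matrix (Fin m) (Fin n) (ZMod 2))
    (σ : Fin k → Fin m) :
    code (N.submatrix σ id) = Submodule.span (ZMod 2) ((fun i => N i) '' Set.range σ) := by
  rw [code, range_vecMulLinear, ← Set.range_comp]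
  rfl

/-- The rows of T2·G24 indexed by A2 (one-based {2,3,4,8,12,14,15,16,20,22,23,24})
generate the extended Golay code [[G8',G8',G8'],[G8,G8,0],[0,G8,G8]]. -/
theorem kernel2_golay :
    Submodule.span (ZMod 2)
      ((fun i => (T2 * G24b) i) ''
        ({1, 2, 3, 7, 11, 13, 14, 15, 19, 21, 22, 23} : Set (Fin 24))) =
    code (build ![![G8', G8', G8'], ![G8, G8, 0], ![0, G8, G8]]) := by
  have hblocks : ![![G8', G8', G8'], ![G8, G8, 0], ![0, G8, G8]] = fun I J =>
      (![![T8 * F8, T8 * F8, T8 * F8], ![F8, F8, 0], ![0, F8, F8]] I J).submatrix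
        (![![3, 2, 1, 7], ![3, 5, 6, 7], ![3, 5, 6, 7]] I) id := by
    funext I J
    fin_cases I <;> fin_cases J <;>
      first | exact G8_eq_submatrix_F8 | exact G8'_eq_submatrix_T8_mul_F8 | rfl
  have hindex : blockRowIndex ![![3, 2, 1, 7], ![3, 5, 6, 7], ![3, 5, 6, 7]] =
      ![3, 2, 1, 7, 11, 13, 14, 15, 19, 21, 22, 23] := by
    funext k
    fin_cases k <;> rfl
  have hA2 : ({1, 2, 3, 7, 11, 13, 14, 15, 19, 21, 22, 23} : Set (Fin 24)) =
      Set.range ![3, 2, 1, 7, 11, 13, 14, 15, 19, 21, 22, 23] := by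
    ext i
    simp only [Set.mem_insert_iff, Set.mem_singleton_iff, range_cons, range_empty,
      Set.union_empty, Set.mem_union]
    tauto
  rw [hblocks, build_submatrix_eq_build8_submatrix, ← T2_mul_G24b, hindex,
    code_submatrix_rows, hA2]
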